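/- Work in R = ℚ[[t₁,t₂]][x^{±1}, y^{±1}] modulo the ideal (t₁², t₂²). Define algebra automorphisms θ₁: x ↦ x, y ↦ y(1+t₁x) and θ₂: x ↦ x(1+t₂y), y ↦ y, and θ₁₂: x ↦ x(1+t₁t₂xy), y ↦ y(1+t₁t₂xy)^{-1}. Then θ₁ ∘ θ₂ = θ₂ ∘ θ₁₂ ∘ θ₁ as automorphisms of R (equivalently, the commutator θ₂^{-1}θ₁^{-1}θ₂θ₁ equals the wall-crossing θ₁₂ attached to the new ray of direction (1,1) with function 1 + t₁t₂xy). -/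
import Mathlib

/-- If two ring homomorphisms agree on the value of a unit, they agree on its inverse. -/
lemma eq_on_inv_of_eq {R : Type*} [CommRing R] (f g : R →+* R) (u : Rˣ)
    (h : f u = g u) : f ((u⁻¹ : Rˣ) : R) = g ((u⁻¹ : Rˣ) : R) := by
  have hf : f u * f ((u⁻¹ : Rˣ) : R) = 1 := by
    rw [← map_mul, ← Units.val_mul, mul_inv_cancel, Units.val_one, map_one]
  have hg : g u * g ((u⁻¹ : Rˣ) : R) = 1 := by
    rw [← map_mul, ← Units.val_mul, mul_inv_cancel, Units.val_one, map_one]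
  calc f ((u⁻¹ : Rˣ) : R) = f ((u⁻¹ : Rˣ) : R) * (g u * g ((u⁻¹ : Rˣ) : R)) := by
        rw [hg, mul_one]
    _ = (f u * f ((u⁻¹ : Rˣ) : R)) * g ((u⁻¹ : Rˣ) : R) := by rw [h]; ring
    _ = g ((u⁻¹ : Rˣ) : R) := by rw [hf, one_mul]

/-- The basic Kontsevich–Soibelman scattering computation in
`R = ℚ[[t₁,t₂]][x^{±1},y^{±1}]` modulo `(t₁², t₂²)` (modelled by a commutative ring `R`
generated by elements `t₁, t₂` with `t₁² = t₂² = 0` and units `x, y`): for the wall-crossing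
automorphisms `θ₁ : x ↦ x, y ↦ y(1+t₁x)`, `θ₂ : x ↦ x(1+t₂y), y ↦ y` and
`θ₁₂ : x ↦ x(1+t₁t₂xy), y ↦ y(1+t₁t₂xy)⁻¹ = y(1-t₁t₂xy)` one has
`θ₁ ∘ θ₂ = θ₂ ∘ θ₁₂ ∘ θ₁` as automorphisms of `R`; equivalently the commutator
`θ₂⁻¹θ₁⁻¹θ₂θ₁` is the wall-crossing of the new ray of direction `(1,1)` with function
`1 + t₁t₂xy`. -/
theorem stmt_6 (R : Type*) [CommRing R] (t₁ t₂ : R) (x y : Rˣ)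
    (ht₁ : t₁ ^ 2 = 0) (ht₂ : t₂ ^ 2 = 0)
    (hgen : Subring.closure {t₁, t₂, (x : R), (y : R), ((x⁻¹ : Rˣ) : R), ((y⁻¹ : Rˣ) : R)} = ⊤)
    (θ₁ θ₂ θ₁₂ : R ≃+* R)
    (hθ₁t₁ : θ₁ t₁ = t₁) (hθ₁t₂ : θ₁ t₂ = t₂)
    (hθ₂t₁ : θ₂ t₁ = t₁) (hθ₂t₂ : θ₂ t₂ = t₂)
    (hθ₁₂t₁ : θ₁₂ t₁ = t₁) (hθ₁₂t₂ : θ₁₂ t₂ = t₂)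
    (hθ₁x : θ₁ (x : R) = x) (hθ₁y : θ₁ (y : R) = y * (1 + t₁ * x))
    (hθ₂x : θ₂ (x : R) = x * (1 + t₂ * y)) (hθ₂y : θ₂ (y : R) = y)
    (hθ₁₂x : θ₁₂ (x : R) = x * (1 + t₁ * t₂ * x * y))
    (hθ₁₂y : θ₁₂ (y : R) = y * (1 - t₁ * t₂ * x * y)) :
    θ₂.trans θ₁ = (θ₁.trans θ₁₂).trans θ₂ := by
  set f : R →+* R := ((θ₂.trans θ₁ : R ≃+* R) : R →+* R) with hfdef
  set g : R →+* R := (((θ₁.trans θ₁₂).trans θ₂ : R ≃+* R) : R →+* R) with hgdef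
  have hf : ∀ r : R, f r = θ₁ (θ₂ r) := fun r => rfl
  have hg : ∀ r : R, g r = θ₂ (θ₁₂ (θ₁ r)) := fun r => rfl
  have ht1 : f t₁ = g t₁ := by rw [hf, hg, hθ₂t₁, hθ₁t₁, hθ₁₂t₁, hθ₂t₁]
  have ht2 : f t₂ = g t₂ := by rw [hf, hg, hθ₂t₂, hθ₁t₂, hθ₁₂t₂, hθ₂t₂]
  have hsimp : ∀ r : R, f r = g r → f r = g r := fun _ h => h
  have hx : f (x : R) = g (x : R) := by
    simp only [hf, hg, map_mul, map_add, map_sub, map_one, hθ₁t₁, hθ₁t₂, hθ₁x, hθ₁y,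
      hθ₁₂t₁, hθ₁₂t₂, hθ₁₂x, hθ₁₂y, hθ₂t₁, hθ₂t₂, hθ₂x, hθ₂y]
    linear_combination (-2 * t₁ * (x : R) ^ 2 * (y : R) ^ 2
      - t₁ * t₂ * (x : R) ^ 2 * (y : R) ^ 3) * ht₂
  have hy : f (y : R) = g (y : R) := by
    simp only [hf, hg, map_mul, map_add, map_sub, map_one, hθ₁t₁, hθ₁t₂, hθ₁x, hθ₁y,
      hθ₁₂t₁, hθ₁₂t₂, hθ₁₂x, hθ₁₂y, hθ₂t₁, hθ₂t₂, hθ₂x, hθ₂y]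
    linear_combination (t₁ * t₂ ^ 2 * (x : R) ^ 3 * (y : R) ^ 3
      + 3 * t₁ * t₂ ^ 3 * (x : R) ^ 3 * (y : R) ^ 4
      + 3 * t₁ * t₂ ^ 4 * (x : R) ^ 3 * (y : R) ^ 5
      + t₁ * t₂ ^ 5 * (x : R) ^ 3 * (y : R) ^ 6) * ht₁
      + (t₁ * (x : R) * (y : R) ^ 3) * ht₂
  have hxi : f ((x⁻¹ : Rˣ) : R) = g ((x⁻¹ : Rˣ) : R) := eq_on_inv_of_eq f g x hx
  have hyi : f ((y⁻¹ : Rˣ) : R) = g ((y⁻¹ : Rˣ) : R) := eq_on_inv_of_eq f g y hy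
  have hle : Subring.closure {t₁, t₂, (x : R), (y : R), ((x⁻¹ : Rˣ) : R), ((y⁻¹ : Rˣ) : R)}
      ≤ RingHom.eqLocus f g := by
    rw [Subring.closure_le]
    intro s hs
    simp only [Set.mem_insert_iff, Set.mem_singleton_iff] at hs
    rcases hs with rfl | rfl | rfl | rfl | rfl | rfl
    exacts [ht1, ht2, hx, hy, hxi, hyi]
  have hall : ∀ r : R, f r = g r := by
    intro r
    have : r ∈ RingHom.eqLocus f g := hle (hgen ▸ Subring.mem_top r)
    exact this
  exact RingEquiv.ext fun r => hall r
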